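/- arXiv:2507.04589 — 2 statements merged into one kernel-verified Lean document; each statement's English description precedes it below -/
import Mathlib

section
/- In an optimal (minimum-cost) tree-structured feasible flow, the flow on any edge of the tree equals the maximum demand among the destination nodes lying below that edge (i.e., destinations whose unique root-to-leaf path uses that edge). -/
namespace OST

variable {V : Type} [DecidableEq V]

/-- A feasible flow for the outflow-constrained minimum flow problem. -/
structure Feasible (E : V → V → Prop) (s : V) (D : Set V) (x : V → ℝ)
    (f : V → V → ℝ) : Prop where
  nonneg : ∀ i j, 0 ≤ f i j
  support : ∀ i j, ¬ E i j → f i j = 0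
  /-- at every non-source node, every outflow value is bounded by some inflow value
      (max outflow ≤ max inflow) -/
  conserve : ∀ i, i ≠ s → ∀ j, ∃ k, f i j ≤ f k i
  /-- every destination receives inflow at least its demand -/
  demand : ∀ d ∈ D, ∃ i, x d ≤ f i d

/-- Total weighted cost of a flow. -/
noncomputable def cost [Fintype V] (e f : V → V → ℝ) : ℝ :=
  ∑ i, ∑ j, e i j * f i j

/-- The (undirected) flow-carrying edge relation. -/
def carry (f : V → V → ℝ) (a b : V) : Prop := 0 < f a b ∨ 0 < f b a

/-- Directed reachability inside a set of directed edges. -/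
def reach (T : Set (V × V)) (a b : V) : Prop :=
  Relation.ReflTransGen (fun p q => (p, q) ∈ T) a b

/-- `T` is a tree rooted at `v`, edges directed away from the root. -/
structure IsRootedTree (E : V → V → Prop) (v : V) (T : Set (V × V)) : Prop where
  edges : ∀ p ∈ T, E p.1 p.2
  parent_unique : ∀ u u' w, (u, w) ∈ T → (u', w) ∈ T → u = u'
  root_no_parent : ∀ u, (u, v) ∉ T
  reach_root : ∀ p ∈ T, reach T v p.1

/-- The rooted edge set `T` connects `v` to every node of `S`. -/
def Spans (T : Set (V × V)) (v : V) (S : Set V) : Prop := ∀ d ∈ S, reach T v d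

/-- Maximum demand among destinations of `S` lying below node `w` in `T`
    (`0` if there are none, by convention of `sSup` on `ℝ`). -/
noncomputable def maxBelow (T : Set (V × V)) (S : Set V) (x : V → ℝ) (w : V) : ℝ :=
  sSup (x '' {d ∈ S | reach T w d})

/-- Steiner-flow cost of a rooted tree: each edge is charged its weight times the
    maximum demand among destinations of `S` below it. -/
noncomputable def treeCost (e : V → V → ℝ) (x : V → ℝ) (S : Set V)
    (T : Finset (V × V)) : ℝ :=
  ∑ p ∈ T, e p.1 p.2 * maxBelow (↑T) S x p.2

/-- Minimum Steiner-flow cost from root `v` to destination set `S`. -/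
noncomputable def delta (E : V → V → Prop) (e : V → V → ℝ) (x : V → ℝ)
    (v : V) (S : Set V) : ℝ :=
  sInf {c | ∃ T : Finset (V × V),
    IsRootedTree E v ↑T ∧ Spans (↑T) v S ∧ c = treeCost e x S T}

/-- `l` lists the successive vertices of a walk starting at the given vertex. -/
def IsWalk (R : V → V → Prop) : V → List V → Prop
  | _, [] => True
  | a, b :: l => R a b ∧ IsWalk R b l

/-- Total edge weight of a walk. -/
noncomputable def walkCost (e : V → V → ℝ) : V → List V → ℝ
  | _, [] => 0
  | a, b :: l => e a b + walkCost e b l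

/-- Weighted shortest-path distance. -/
noncomputable def dist (E : V → V → Prop) (e : V → V → ℝ) (a b : V) : ℝ :=
  sInf {c | ∃ l : List V, IsWalk E a l ∧
    (a :: l).getLast (List.cons_ne_nil a l) = b ∧ c = walkCost e a l}

/-- Hop distance in a directed relation. -/
noncomputable def hopDist (R : V → V → Prop) (a b : V) : ℕ :=
  sInf {n | ∃ l : List V, IsWalk R a l ∧
    (a :: l).getLast (List.cons_ne_nil a l) = b ∧ l.length = n}

/-- A feasible flow supported on the rooted tree `T`. -/
structure TreeFeasible (T : Set (V × V)) (D : Set V) (x : V → ℝ)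
    (f : V → V → ℝ) : Prop where
  nonneg : ∀ i j, 0 ≤ f i j
  support : ∀ i j, (i, j) ∉ T → f i j = 0
  /-- flow is nonincreasing away from the root -/
  mono : ∀ u w z, (u, w) ∈ T → (w, z) ∈ T → f w z ≤ f u w
  /-- each destination's parent edge carries at least its demand -/
  demand : ∀ d ∈ D, ∀ u, (u, d) ∈ T → x d ≤ f u d


/-- in an optimal tree-structured feasible flow, the flow on each tree
edge equals the maximum demand among destinations lying below that edge. -/
theorem stmt3 [Fintype V] (E : V → V → Prop)
    (e : V → V → ℝ) (hepos : ∀ i j, E i j → 0 < e i j)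
    (s : V) (D : Set V) (hsD : s ∉ D) (x : V → ℝ) (hx : ∀ d ∈ D, 0 < x d)
    (T : Finset (V × V)) (hT : IsRootedTree E s ↑T) (hspan : Spans (↑T) s D)
    (f : V → V → ℝ) (hf : TreeFeasible (↑T) D x f)
    (hopt : ∀ g, TreeFeasible (↑T) D x g →
      (∑ p ∈ T, e p.1 p.2 * f p.1 p.2) ≤ ∑ p ∈ T, e p.1 p.2 * g p.1 p.2) :
    ∀ p ∈ T, f p.1 p.2 = maxBelow (↑T) D x p.2 := by
  classical
  set M := maxBelow (↑T : Set (V × V)) D x with hM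
  have hbdd : ∀ w : V, BddAbove (x '' {d ∈ D | reach (↑T) w d}) :=
    fun w => (Set.toFinite _).bddAbove
  have hMnonneg : ∀ w, 0 ≤ M w := by
    intro w
    apply Real.sSup_nonneg
    rintro y ⟨d, ⟨hd, _⟩, rfl⟩
    exact (hx d hd).le
  have hMmono : ∀ w z, (w, z) ∈ T → M z ≤ M w := by
    intro w z hwz
    rcases Set.eq_empty_or_nonempty (x '' {d ∈ D | reach (↑T) z d}) with h | h
    · rw [hM]; unfold maxBelow; rw [h, Real.sSup_empty]; exact hMnonneg w
    · apply csSup_le_csSup (hbdd w) h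
      rintro y ⟨d, ⟨hd, hr⟩, rfl⟩
      exact ⟨d, ⟨hd, Relation.ReflTransGen.head (Finset.mem_coe.mpr hwz) hr⟩, rfl⟩
  have key : ∀ w d, reach (↑T) w d → d ∈ D → ∀ u, (u, w) ∈ T → x d ≤ f u w := by
    intro w d hr hd
    induction hr using Relation.ReflTransGen.head_induction_on with
    | refl => intro u hu; exact hf.demand d hd u (Finset.mem_coe.mpr hu)
    | head hab hbd ih =>
        intro u hu
        exact le_trans (ih _ hab) (hf.mono u _ _ (Finset.mem_coe.mpr hu) hab)
  have hMle : ∀ p ∈ T, M p.2 ≤ f p.1 p.2 := by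
    intro p hp
    apply Real.sSup_le
    · rintro y ⟨d, ⟨hd, hr⟩, rfl⟩
      exact key _ d hr hd p.1 hp
    · exact hf.nonneg p.1 p.2
  set g : V → V → ℝ := fun i j => if (i, j) ∈ T then M j else 0 with hg
  have hgmem : ∀ i j, (i, j) ∈ T → g i j = M j := by
    intro i j h; simp [hg, h]
  have hgfeas : TreeFeasible (↑T) D x g := by
    constructor
    · intro i j
      by_cases h : (i, j) ∈ T
      · rw [hgmem _ _ h]; exact hMnonneg j
      · simp [hg, h]
    · intro i j h; simp [hg, Finset.mem_coe.not.mp h]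
    · intro u w z huw hwz
      rw [hgmem _ _ (Finset.mem_coe.mp huw), hgmem _ _ (Finset.mem_coe.mp hwz)]
      exact hMmono w z (Finset.mem_coe.mp hwz)
    · intro d hd u hud
      rw [hgmem _ _ (Finset.mem_coe.mp hud)]
      exact le_csSup (hbdd d) ⟨d, ⟨hd, Relation.ReflTransGen.refl⟩, rfl⟩
  have hge : ∀ p ∈ T, e p.1 p.2 * g p.1 p.2 ≤ e p.1 p.2 * f p.1 p.2 := by
    intro p hp
    have he : 0 < e p.1 p.2 := hepos _ _ (hT.edges p (Finset.mem_coe.mpr hp))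
    rw [hgmem _ _ hp]
    exact mul_le_mul_of_nonneg_left (hMle p hp) he.le
  have h1 : (∑ p ∈ T, e p.1 p.2 * g p.1 p.2) ≤ ∑ p ∈ T, e p.1 p.2 * f p.1 p.2 :=
    Finset.sum_le_sum hge
  have heq : (∑ p ∈ T, e p.1 p.2 * g p.1 p.2) = ∑ p ∈ T, e p.1 p.2 * f p.1 p.2 :=
    le_antisymm h1 (hopt g hgfeas)
  intro p hp
  have hterm := (Finset.sum_eq_sum_iff_of_le hge).mp heq p hp
  have he : 0 < e p.1 p.2 := hepos _ _ (hT.edges p (Finset.mem_coe.mpr hp))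
  have : g p.1 p.2 = f p.1 p.2 := mul_left_cancel₀ he.ne' hterm
  rw [← this, hgmem _ _ hp]

end OST
end

section
/- For a tree T rooted at s containing all destinations D among its vertices, the minimum cost of a feasible flow supported on T equals ∑ over edges (u,v) of T of e(u,v) · max{x(d) : d ∈ D, d is in the subtree below (u,v)}. -/
namespace OST

variable {V : Type} [DecidableEq V]

lemma maxBelow_bddAbove [Fintype V] (T : Set (V × V)) (S : Set V) (x : V → ℝ) (w : V) :
    BddAbove (x '' {d ∈ S | reach T w d}) :=
  ((Set.toFinite _).image x).bddAbove

lemma maxBelow_nonneg [Fintype V] (T : Set (V × V)) (S : Set V) (x : V → ℝ)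
    (hx : ∀ d ∈ S, 0 < x d) (w : V) : 0 ≤ maxBelow T S x w := by
  apply Real.sSup_nonneg
  rintro y ⟨d, ⟨hd, _⟩, rfl⟩
  exact (hx d hd).le

lemma maxBelow_le [Fintype V] {T : Set (V × V)} {S : Set V} {x : V → ℝ} {w : V} {c : ℝ}
    (hc : 0 ≤ c) (h : ∀ d ∈ S, reach T w d → x d ≤ c) : maxBelow T S x w ≤ c := by
  apply Real.sSup_le _ hc
  rintro y ⟨d, ⟨hd, hr⟩, rfl⟩
  exact h d hd hr

lemma le_maxBelow [Fintype V] {T : Set (V × V)} {S : Set V} {x : V → ℝ} {w d : V}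
    (hd : d ∈ S) (hr : reach T w d) : x d ≤ maxBelow T S x w :=
  le_csSup (maxBelow_bddAbove T S x w) ⟨d, ⟨hd, hr⟩, rfl⟩

/-- for a rooted tree `T` containing all destinations, the minimum cost
of a feasible flow supported on `T` equals `∑ over edges (u,v) of T of
e(u,v) · max{x d : d ∈ D below (u,v)}`. -/
theorem stmt4 [Fintype V] (E : V → V → Prop)
    (e : V → V → ℝ) (hepos : ∀ i j, E i j → 0 < e i j)
    (s : V) (D : Set V) (hsD : s ∉ D) (x : V → ℝ) (hx : ∀ d ∈ D, 0 < x d)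
    (T : Finset (V × V)) (hT : IsRootedTree E s ↑T) (hspan : Spans (↑T) s D)
    (hleaf : ∀ w : V, (∃ u, (u, w) ∈ T) → (∀ z, (w, z) ∉ T) → w ∈ D) :
    IsLeast {c | ∃ f : V → V → ℝ, TreeFeasible (↑T) D x f ∧
        c = ∑ p ∈ T, e p.1 p.2 * f p.1 p.2}
      (treeCost e x D T) := by
  constructor
  · -- membership: the flow f i j = if (i,j) ∈ T then maxBelow _ D x j else 0
    refine ⟨fun i j => if (i, j) ∈ T then maxBelow (↑T) D x j else 0, ?_, ?_⟩
    · constructor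
      · intro i j
        by_cases h : (i, j) ∈ T
        · simpa [h] using maxBelow_nonneg (↑T) D x hx j
        · simp [h]
      · intro i j h
        simp only [Finset.mem_coe] at h
        simp [h]
      · intro u w z huw hwz
        simp only [Finset.mem_coe] at huw hwz
        simp only [huw, hwz, if_true]
        by_cases h : (x '' {d ∈ D | reach (↑T) z d}).Nonempty
        · refine csSup_le_csSup (maxBelow_bddAbove _ D x w) h ?_
          rintro y ⟨d, ⟨hd, hr⟩, rfl⟩
          exact ⟨d, ⟨hd, Relation.ReflTransGen.head hwz hr⟩, rfl⟩
        · rw [Set.not_nonempty_iff_eq_empty] at h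
          unfold maxBelow
          rw [h, Real.sSup_empty]
          exact maxBelow_nonneg (↑T) D x hx w
      · intro d hd u hud
        simp only [Finset.mem_coe] at hud
        simp only [hud, if_true]
        exact le_maxBelow hd Relation.ReflTransGen.refl
    · refine Finset.sum_congr rfl fun p hp => ?_
      simp [hp, treeCost]
  · rintro c ⟨f, hf, rfl⟩
    have claim : ∀ d ∈ D, ∀ w, reach (↑T) w d → ∀ u, (u, w) ∈ T → x d ≤ f u w := by
      intro d hd w hr
      induction hr using Relation.ReflTransGen.head_induction_on with
      | refl => exact fun u hu => hf.demand d hd u hu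
      | head hac _ ih => exact fun u hu => (ih _ hac).trans (hf.mono _ _ _ hu hac)
    have key : ∀ p ∈ T, maxBelow (↑T) D x p.2 ≤ f p.1 p.2 := by
      rintro ⟨u, w⟩ hp
      exact maxBelow_le (hf.nonneg u w) fun d hd hr => claim d hd w hr u hp
    refine Finset.sum_le_sum fun p hp => ?_
    exact mul_le_mul_of_nonneg_left (key p hp)
      (hepos _ _ (hT.edges p hp)).le

end OST
end
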